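/- arXiv:2603.20029 — 2 statements merged into one kernel-verified Lean document; each statement's English description precedes it below -/
import Mathlib

section
/- Let 𝒫 be a finite set partitioned into a finite nonempty collection 𝒢 of pairwise disjoint nonempty subsets (groups), let c : 𝒫 → ℝ, and let (X_P)_{P∈𝒫} be square-integrable real random variables with means μ_P = 𝔼[X_P]. Let π : 𝒢 → ℝ with π_G > 0 for all G and ∑_G π_G = 1, and let I be a 𝒢-valued random variable with ℙ(I = G) = π_G, independent of the family (X_P). Then the estimator Y = (1/π_I) ∑_{P∈I} c_P X_P has variance Var(Y) = ∑_{G∈𝒢} (1/π_G) 𝔼[(∑_{P∈G} c_P X_P)²] − (∑_{P∈𝒫} c_P μ_P)². -/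
/-!
Write `S_G = ∑_{P ∈ G} c_P X_P`. On the event `{I = G}` the estimator equals `S_G / π_G`, so
`Y = ∑_G 1_{I = G} S_G / π_G` and `Y² = ∑_G 1_{I = G} S_G² / π_G²`. Since `I` is independent of
the `X_P`, the indicator of `{I = G}` factors out of each expectation with weight `π_G`, giving
`𝔼[Y] = ∑_G 𝔼[S_G] = ∑_P c_P μ_P` (the groups partition `𝒫`) and `𝔼[Y²] = ∑_G 𝔼[S_G²] / π_G`.
-/

open MeasureTheory ProbabilityTheory

namespace ProbabilityTheory

variable {Ω α E : Type*}

lemma Indep.integral_indicator_eq_measureReal_mul {m₁ m₂ mΩ : MeasurableSpace Ω}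
    {μ : Measure Ω} (h : Indep m₁ m₂ μ) {A : Set Ω} (hA₁ : MeasurableSet[m₁] A)
    (hA : MeasurableSet A)
    {g : Ω → ℝ} (hg₂ : Measurable[m₂] g) (hg : AEStronglyMeasurable g μ) :
    ∫ ω, A.indicator g ω ∂μ = μ.real A * ∫ ω, g ω ∂μ := by
  have hindep : A.indicator (fun _ ↦ (1 : ℝ)) ⟂ᵢ[μ] g :=
    Indep.indicator_indepFun 1 hA₁ (indep_of_indep_of_le_right h hg₂.comap_le)
  have hA_ind : A.indicator g = A.indicator (fun _ ↦ (1 : ℝ)) * g := by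
    ext ω
    by_cases hω : ω ∈ A <;> simp [hω]
  rw [hA_ind, hindep.integral_mul_eq_mul_integral
    ((aestronglyMeasurable_const).indicator hA) hg, integral_indicator_const 1 hA, smul_eq_mul,
    mul_one]

lemma eval_randomIndex_eq_sum_indicator [AddCommMonoid E] {I : Ω → α} {s : Finset α}
    (hI : ∀ ω, I ω ∈ s) (F : α → Ω → E) :
    (fun ω ↦ F (I ω) ω) = fun ω ↦ ∑ a ∈ s, (I ⁻¹' {a}).indicator (F a) ω := by
  ext ω
  rw [Finset.sum_eq_single_of_mem (I ω) (hI ω) fun a _ ha ↦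
      Set.indicator_of_notMem (show ω ∉ I ⁻¹' {a} from fun h ↦ ha h.symm) (F a)]
  exact (Set.indicator_of_mem (show ω ∈ I ⁻¹' {I ω} from rfl) _).symm

lemma memLp_eval_randomIndex [NormedAddCommGroup E] {mΩ : MeasurableSpace Ω}
    {μ : Measure Ω} {p : ENNReal} {I : Ω → α}
    {s : Finset α} (hI : ∀ ω, I ω ∈ s) (hImeas : ∀ a, MeasurableSet (I ⁻¹' {a}))
    {F : α → Ω → E} (hF : ∀ a ∈ s, MemLp (F a) p μ) :
    MemLp (fun ω ↦ F (I ω) ω) p μ := by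
  rw [eval_randomIndex_eq_sum_indicator hI F]
  exact memLp_finsetSum _ fun a ha ↦ (hF a ha).indicator (hImeas a)

lemma integral_eval_randomIndex_eq_sum_of_indep {m mΩ : MeasurableSpace Ω}
    {μ : Measure Ω} {I : Ω → α}
    {s : Finset α} (hI : ∀ ω, I ω ∈ s) (hImeas : ∀ a, MeasurableSet (I ⁻¹' {a}))
    (hindep : Indep (MeasurableSpace.comap I ⊤) m μ) {F : α → Ω → ℝ}
    (hFm : ∀ a ∈ s, Measurable[m] (F a)) (hF : ∀ a ∈ s, Integrable (F a) μ) :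
    ∫ ω, F (I ω) ω ∂μ = ∑ a ∈ s, μ.real (I ⁻¹' {a}) * ∫ ω, F a ω ∂μ := by
  rw [eval_randomIndex_eq_sum_indicator hI F,
    integral_finsetSum _ fun a ha ↦ (hF a ha).indicator (hImeas a)]
  exact Finset.sum_congr rfl fun a ha ↦ hindep.integral_indicator_eq_measureReal_mul
    ⟨{a}, trivial, rfl⟩ (hImeas a) (hFm a ha) (hF a ha).aestronglyMeasurable

noncomputable def horvitzThompson (π : α → ℝ) (I : Ω → α) (S : α → Ω → ℝ) : Ω → ℝ :=
  fun ω ↦ 1 / π (I ω) * S (I ω) ω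

section HorvitzThompson

variable {m mΩ : MeasurableSpace Ω} {μ : Measure Ω} {I : Ω → α} {s : Finset α}
  {π : α → ℝ} {S : α → Ω → ℝ}

lemma integral_horvitzThompson (hI : ∀ ω, I ω ∈ s) (hImeas : ∀ a, MeasurableSet (I ⁻¹' {a}))
    (hindep : Indep (MeasurableSpace.comap I ⊤) m μ)
    (hπ : ∀ a ∈ s, μ.real (I ⁻¹' {a}) = π a) (hπne : ∀ a ∈ s, π a ≠ 0)
    (hSm : ∀ a ∈ s, Measurable[m] (S a)) (hS : ∀ a ∈ s, Integrable (S a) μ) :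
    ∫ ω, horvitzThompson π I S ω ∂μ = ∑ a ∈ s, ∫ ω, S a ω ∂μ := by
  simp only [horvitzThompson]
  rw [integral_eval_randomIndex_eq_sum_of_indep (F := fun a ω ↦ 1 / π a * S a ω)
    hI hImeas hindep (fun a ha ↦ (hSm a ha).const_mul _) (fun a ha ↦ (hS a ha).const_mul _)]
  refine Finset.sum_congr rfl fun a ha ↦ ?_
  rw [hπ a ha, integral_const_mul, ← mul_assoc, mul_one_div_cancel (hπne a ha), one_mul]

lemma integral_sq_horvitzThompson (hI : ∀ ω, I ω ∈ s)
    (hImeas : ∀ a, MeasurableSet (I ⁻¹' {a})) (hindep : Indep (MeasurableSpace.comap I ⊤) m μ)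
    (hπ : ∀ a ∈ s, μ.real (I ⁻¹' {a}) = π a) (hπne : ∀ a ∈ s, π a ≠ 0)
    (hSm : ∀ a ∈ s, Measurable[m] (S a)) (hS : ∀ a ∈ s, MemLp (S a) 2 μ) :
    ∫ ω, horvitzThompson π I S ω ^ 2 ∂μ = ∑ a ∈ s, 1 / π a * ∫ ω, S a ω ^ 2 ∂μ := by
  simp only [horvitzThompson]
  rw [integral_eval_randomIndex_eq_sum_of_indep (F := fun a ω ↦ (1 / π a * S a ω) ^ 2)
    hI hImeas hindep (fun a ha ↦ ((hSm a ha).const_mul _).pow_const 2)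
    (fun a ha ↦ ((hS a ha).const_mul _).integrable_sq)]
  refine Finset.sum_congr rfl fun a ha ↦ ?_
  have := hπne a ha
  simp_rw [hπ a ha, mul_pow, integral_const_mul]
  field_simp

lemma variance_horvitzThompson [IsProbabilityMeasure μ] (hI : ∀ ω, I ω ∈ s)
    (hImeas : ∀ a, MeasurableSet (I ⁻¹' {a})) (hindep : Indep (MeasurableSpace.comap I ⊤) m μ)
    (hπ : ∀ a ∈ s, μ.real (I ⁻¹' {a}) = π a) (hπne : ∀ a ∈ s, π a ≠ 0)
    (hSm : ∀ a ∈ s, Measurable[m] (S a)) (hS : ∀ a ∈ s, MemLp (S a) 2 μ) :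
    variance (horvitzThompson π I S) μ
      = ∑ a ∈ s, 1 / π a * ∫ ω, S a ω ^ 2 ∂μ - (∑ a ∈ s, ∫ ω, S a ω ∂μ) ^ 2 := by
  have hmemLp : MemLp (horvitzThompson π I S) 2 μ :=
    memLp_eval_randomIndex (F := fun a ω ↦ 1 / π a * S a ω) hI hImeas
      fun a ha ↦ (hS a ha).const_mul _
  rw [variance_eq_sub hmemLp, ← integral_sq_horvitzThompson hI hImeas hindep hπ hπne hSm hS,
    ← integral_horvitzThompson hI hImeas hindep hπ hπne hSm
      fun a ha ↦ (hS a ha).integrable one_le_two]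
  rfl

end HorvitzThompson

end ProbabilityTheory

lemma Finset.sum_sum_eq_sum_univ_of_partition {ι M : Type*} [Fintype ι] [DecidableEq ι]
    [AddCommMonoid M] {𝒢 : Finset (Finset ι)}
    (hdisj : ∀ G ∈ 𝒢, ∀ G' ∈ 𝒢, G ≠ G' → Disjoint G G')
    (hcover : ∀ P : ι, ∃ G ∈ 𝒢, P ∈ G) (f : ι → M) :
    ∑ G ∈ 𝒢, ∑ P ∈ G, f P = ∑ P, f P := by
  have hunion : 𝒢.biUnion (fun G ↦ G) = Finset.univ :=
    Finset.eq_univ_iff_forall.mpr fun P ↦ Finset.mem_biUnion.mpr (hcover P)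
  rw [← hunion, Finset.sum_biUnion fun G hG G' hG' ↦ hdisj G hG G' hG']

namespace Stmt9

theorem grouped_horvitzThompson_variance_general
    {Ω : Type*} [MeasurableSpace Ω] (Pr : Measure Ω) [IsProbabilityMeasure Pr]
    {ι : Type*} [Fintype ι] [DecidableEq ι]
    (𝒢 : Finset (Finset ι))
    (hdisj : ∀ G ∈ 𝒢, ∀ G' ∈ 𝒢, G ≠ G' → Disjoint G G')
    (hcover : ∀ P : ι, ∃ G ∈ 𝒢, P ∈ G)
    (c : ι → ℝ) (X : ι → Ω → ℝ)
    (hX2 : ∀ P, MemLp (X P) 2 Pr)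
    (μ : ι → ℝ) (hμ : ∀ P, μ P = ∫ ω, X P ω ∂Pr)
    (π : Finset ι → ℝ) (hπpos : ∀ G ∈ 𝒢, 0 < π G)
    (I : Ω → Finset ι) (hImem : ∀ ω, I ω ∈ 𝒢)
    (hImeas : ∀ G : Finset ι, MeasurableSet (I ⁻¹' {G}))
    (hlaw : ∀ G ∈ 𝒢, Pr (I ⁻¹' {G}) = ENNReal.ofReal (π G))
    (hindep : Indep (MeasurableSpace.comap I ⊤)
      (⨆ P, MeasurableSpace.comap (X P) inferInstance) Pr) :
    variance (fun ω => (1 / π (I ω)) * ∑ P ∈ I ω, c P * X P ω) Pr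
      = ∑ G ∈ 𝒢, (1 / π G) * (∫ ω, (∑ P ∈ G, c P * X P ω) ^ 2 ∂Pr)
        - (∑ P, c P * μ P) ^ 2 := by
  let S : Finset ι → Ω → ℝ := fun G ω ↦ ∑ P ∈ G, c P * X P ω
  have hXm : ∀ P, Measurable[⨆ P, MeasurableSpace.comap (X P) inferInstance] (X P) :=
    fun P ↦ (comap_measurable (X P)).mono
      (le_iSup (fun P ↦ MeasurableSpace.comap (X P) inferInstance) P) le_rfl
  have hweight : ∀ G ∈ 𝒢, Pr.real (I ⁻¹' {G}) = π G := fun G hG ↦ by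
    rw [measureReal_def, hlaw G hG, ENNReal.toReal_ofReal (hπpos G hG).le]
  have hES : ∀ G, ∫ ω, S G ω ∂Pr = ∑ P ∈ G, c P * μ P := fun G ↦ by
    rw [integral_finsetSum _ fun P _ ↦ ((hX2 P).integrable one_le_two).const_mul (c P)]
    exact Finset.sum_congr rfl fun P _ ↦ by rw [integral_const_mul, hμ P]
  calc variance (fun ω => (1 / π (I ω)) * ∑ P ∈ I ω, c P * X P ω) Pr
      = variance (horvitzThompson π I S) Pr := rfl
    _ = ∑ G ∈ 𝒢, 1 / π G * ∫ ω, S G ω ^ 2 ∂Pr - (∑ G ∈ 𝒢, ∫ ω, S G ω ∂Pr) ^ 2 :=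
      variance_horvitzThompson hImem hImeas hindep hweight (fun G hG ↦ (hπpos G hG).ne')
        (fun G _ ↦ Finset.measurable_sum G fun P _ ↦ (hXm P).const_mul (c P))
        (fun G _ ↦ memLp_finsetSum G fun P _ ↦ (hX2 P).const_mul (c P))
    _ = _ := by
      rw [Finset.sum_congr rfl fun G _ ↦ hES G,
        Finset.sum_sum_eq_sum_univ_of_partition hdisj hcover]

/-- For a partition of a finite set `𝒫` into a finite nonempty collection `𝒢` of pairwise
disjoint nonempty groups, square-integrable random variables `(X_P)` with means `μ_P`, a
sampling distribution `π` on `𝒢` with strictly positive weights, and a `𝒢`-valued sampling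
variable `I` with law `π` independent of the family `(X_P)`, the estimator
`Y = (1/π_I) ∑_{P∈I} c_P X_P` has variance
`∑_{G∈𝒢} (1/π_G) 𝔼[(∑_{P∈G} c_P X_P)²] − (∑_{P∈𝒫} c_P μ_P)²`. -/
theorem grouped_horvitzThompson_variance
    {Ω : Type*} [MeasurableSpace Ω] (Pr : Measure Ω) [IsProbabilityMeasure Pr]
    {ι : Type*} [Fintype ι] [DecidableEq ι]
    (𝒢 : Finset (Finset ι)) (h𝒢ne : 𝒢.Nonempty)
    (hGne : ∀ G ∈ 𝒢, G.Nonempty)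
    (hdisj : ∀ G ∈ 𝒢, ∀ G' ∈ 𝒢, G ≠ G' → Disjoint G G')
    (hcover : ∀ P : ι, ∃ G ∈ 𝒢, P ∈ G)
    (c : ι → ℝ) (X : ι → Ω → ℝ)
    (hXmeas : ∀ P, Measurable (X P))
    (hX2 : ∀ P, MemLp (X P) 2 Pr)
    (μ : ι → ℝ) (hμ : ∀ P, μ P = ∫ ω, X P ω ∂Pr)
    (π : Finset ι → ℝ) (hπpos : ∀ G ∈ 𝒢, 0 < π G) (hπsum : ∑ G ∈ 𝒢, π G = 1)
    (I : Ω → Finset ι) (hImem : ∀ ω, I ω ∈ 𝒢)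
    (hImeas : ∀ G : Finset ι, MeasurableSet (I ⁻¹' {G}))
    (hlaw : ∀ G ∈ 𝒢, Pr (I ⁻¹' {G}) = ENNReal.ofReal (π G))
    (hindep : Indep (MeasurableSpace.comap I ⊤)
      (⨆ P, MeasurableSpace.comap (X P) inferInstance) Pr) :
    variance (fun ω => (1 / π (I ω)) * ∑ P ∈ I ω, c P * X P ω) Pr
      = ∑ G ∈ 𝒢, (1 / π G) * (∫ ω, (∑ P ∈ G, c P * X P ω) ^ 2 ∂Pr)
        - (∑ P, c P * μ P) ^ 2 :=
  grouped_horvitzThompson_variance_general Pr 𝒢 hdisj hcover c X hX2 μ hμ π hπpos I hImem hImeas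
    hlaw hindep

end Stmt9
end

section
/- Let 𝒫 be a finite set, 𝒢 a finite nonempty collection of subsets of 𝒫 whose union is 𝒫, c : 𝒫 → ℝ, and M_G ∈ ℕ with M_G ≥ 1 for each G ∈ 𝒢, M = ∑_G M_G, M_P = ∑_{G∋P} M_G, and π_G = M_G/M, π_P = M_P/M. Let (X_P)_{P∈𝒫} be random variables with X_P(ω) ∈ {−1,1} for all ω, means μ_P and second moments S_{PQ} = 𝔼[X_P X_Q]. Consider (i) the deterministic M-round estimator Ô^det built from M independent identically distributed copies of (X_P), with each group G measured exactly M_G times and with the estimate ∑_P (c_P/M_P) ∑_{r: P∈G_r} X_P^{(r)}, and (ii) the one-shot Horvitz–Thompson estimator Ô_π = ∑_{P∈I} (c_P/π_P) X_P, where I has law π and is independent of (X_P). Then Var(Ô^det) ≤ (1/M) · Var(Ô_π). -/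
namespace Stmt17

open MeasureTheory ProbabilityTheory

/-- Comparison of deterministic and Horvitz–Thompson estimators: with `±1`-valued random
variables `(X_P)`, a cover `𝒢` with round counts `M_G ≥ 1`, `M = ∑_G M_G`,
`M_P = ∑_{G∋P} M_G`, and probabilities `π_G = M_G/M`, `π_P = M_P/M`, the deterministic
`M`-round estimator `Ô^det` (built from `M` i.i.d. copies of `(X_P)`, group `G` being
measured exactly `M_G` times) and the one-shot Horvitz–Thompson estimator
`Ô_π = ∑_{P∈I} (c_P/π_P) X_P` (with `I` of law `π` independent of `(X_P)`) satisfy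
`Var(Ô^det) ≤ (1/M)·Var(Ô_π)`. -/
theorem deterministic_variance_le_horvitzThompson_variance
    {Ω : Type*} [MeasurableSpace Ω] (Pr : Measure Ω) [IsProbabilityMeasure Pr]
    {ι : Type*} [Fintype ι] [DecidableEq ι]
    (𝒢 : Finset (Finset ι)) (h𝒢ne : 𝒢.Nonempty)
    (hcover : ∀ P : ι, ∃ G ∈ 𝒢, P ∈ G)
    (c : ι → ℝ)
    (MG : Finset ι → ℕ) (hMG1 : ∀ G ∈ 𝒢, 1 ≤ MG G)
    (M : ℕ) (hM : M = ∑ G ∈ 𝒢, MG G)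
    (MP : ι → ℕ) (hMP : ∀ P : ι, MP P = ∑ G ∈ 𝒢.filter (fun G => P ∈ G), MG G)
    -- the one-shot `±1`-valued random variables
    (X : ι → Ω → ℝ)
    (hXmeas : ∀ P, Measurable (X P))
    (hXpm : ∀ P ω, X P ω = -1 ∨ X P ω = 1)
    -- the `M` i.i.d. copies used by the deterministic estimator
    (Xc : Fin M → ι → Ω → ℝ)
    (hXcmeas : ∀ r P, Measurable (Xc r P))
    (hXcindep : iIndepFun
      (fun r ω => fun P => Xc r P ω) Pr)
    (hXcident : ∀ r : Fin M,
      IdentDistrib (fun ω => fun P => Xc r P ω) (fun ω => fun P => X P ω) Pr Pr)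
    -- the deterministic schedule: round `r` measures group `G_r`, `G` occurring `M_G` times
    (Grp : Fin M → Finset ι) (hGrp : ∀ r, Grp r ∈ 𝒢)
    (hcount : ∀ G ∈ 𝒢, (Finset.univ.filter (fun r : Fin M => Grp r = G)).card = MG G)
    -- the sampling variable of the one-shot Horvitz–Thompson estimator, of law `π_G = M_G/M`
    (I : Ω → Finset ι) (hImem : ∀ ω, I ω ∈ 𝒢)
    (hImeas : ∀ G : Finset ι, MeasurableSet (I ⁻¹' {G}))
    (hlaw : ∀ G ∈ 𝒢, Pr (I ⁻¹' {G}) = ENNReal.ofReal ((MG G : ℝ) / (M : ℝ)))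
    (hindep : Indep (MeasurableSpace.comap I ⊤)
      (⨆ P, MeasurableSpace.comap (X P) inferInstance) Pr) :
    variance (fun ω => ∑ P, (c P / (MP P : ℝ)) *
        ∑ r ∈ Finset.univ.filter (fun r : Fin M => P ∈ Grp r), Xc r P ω) Pr
      ≤ (1 / (M : ℝ)) *
        variance (fun ω => ∑ P ∈ I ω, (c P / ((MP P : ℝ) / (M : ℝ))) * X P ω) Pr := by
  classical
  obtain ⟨G₀, hG₀⟩ := h𝒢ne
  have hMpos : 0 < M := by
    have h1 : 1 ≤ MG G₀ := hMG1 G₀ hG₀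
    have h2 : MG G₀ ≤ ∑ G ∈ 𝒢, MG G := Finset.single_le_sum (fun G _ => Nat.zero_le _) hG₀
    omega
  have hMne : (M : ℝ) ≠ 0 := Nat.cast_ne_zero.mpr hMpos.ne'
  have hMnn : (0:ℝ) ≤ (M:ℝ) := Nat.cast_nonneg _
  set w : ι → ℝ := fun P => c P / (MP P : ℝ) with hw
  set g : Finset ι → Ω → ℝ := fun G ω => ∑ P ∈ G, w P * X P ω with hgdef
  set B : ℝ := ∑ P : ι, |w P| with hBdef
  have hBnn : 0 ≤ B := Finset.sum_nonneg fun P _ => abs_nonneg _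
  have hXabs : ∀ P ω, |X P ω| ≤ 1 := by
    intro P ω; rcases hXpm P ω with h | h <;> rw [h] <;> norm_num
  have hgbound : ∀ G ω, |g G ω| ≤ B := by
    intro G ω
    calc |g G ω| ≤ ∑ P ∈ G, |w P * X P ω| := Finset.abs_sum_le_sum_abs _ _
      _ ≤ ∑ P ∈ G, |w P| := by
          refine Finset.sum_le_sum fun P _ => ?_
          rw [abs_mul]
          calc |w P| * |X P ω| ≤ |w P| * 1 :=
                mul_le_mul_of_nonneg_left (hXabs P ω) (abs_nonneg _)
            _ = |w P| := mul_one _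
      _ ≤ B := Finset.sum_le_sum_of_subset_of_nonneg (Finset.subset_univ G)
            (fun P _ _ => abs_nonneg _)
  have hgmeas : ∀ G, Measurable (g G) := fun G =>
    Finset.measurable_sum _ (fun P _ => (hXmeas P).const_mul _)
  have hgL2 : ∀ G, MemLp (g G) 2 Pr := fun G =>
    MemLp.of_bound (hgmeas G).aestronglyMeasurable B
      (Filter.Eventually.of_forall fun ω => by
        simpa [Real.norm_eq_abs] using hgbound G ω)
  -- the per-round functions of the deterministic estimator
  have hφmeas : ∀ G : Finset ι, Measurable (fun x : ι → ℝ => ∑ P ∈ G, w P * x P) :=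
    fun G => Finset.measurable_sum _ (fun P _ => (measurable_pi_apply P).const_mul _)
  set Y : Fin M → Ω → ℝ := fun r ω => ∑ P ∈ Grp r, w P * Xc r P ω with hYdef
  have hYident : ∀ r, IdentDistrib (Y r) (g (Grp r)) Pr Pr := by
    intro r
    have h := (hXcident r).comp (hφmeas (Grp r))
    exact h
  have hYL2 : ∀ r, MemLp (Y r) 2 Pr := fun r => (hYident r).symm.memLp_snd (hgL2 _)
  have hYindep : ∀ r s : Fin M, r ≠ s → IndepFun (Y r) (Y s) Pr := by
    intro r s hrs
    have h := hXcindep.comp (fun r => fun x : ι → ℝ => ∑ P ∈ Grp r, w P * x P)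
      (fun r => hφmeas (Grp r))
    exact h.indepFun hrs
  -- the deterministic estimator is the sum of the per-round functions
  have hdet : (fun ω => ∑ P, (c P / (MP P : ℝ)) *
        ∑ r ∈ Finset.univ.filter (fun r : Fin M => P ∈ Grp r), Xc r P ω)
      = fun ω => ∑ r : Fin M, Y r ω := by
    funext ω
    have hterm : ∀ P : ι, (c P / (MP P:ℝ)) *
        ∑ r ∈ Finset.univ.filter (fun r : Fin M => P ∈ Grp r), Xc r P ω
        = ∑ r : Fin M, if P ∈ Grp r then w P * Xc r P ω else 0 := by
      intro P
      rw [Finset.mul_sum, Finset.sum_filter]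
    calc ∑ P, (c P / (MP P : ℝ)) *
          ∑ r ∈ Finset.univ.filter (fun r : Fin M => P ∈ Grp r), Xc r P ω
        = ∑ P : ι, ∑ r : Fin M, if P ∈ Grp r then w P * Xc r P ω else 0 :=
          Finset.sum_congr rfl (fun P _ => hterm P)
      _ = ∑ r : Fin M, ∑ P : ι, if P ∈ Grp r then w P * Xc r P ω else 0 := Finset.sum_comm
      _ = ∑ r : Fin M, Y r ω := by
          refine Finset.sum_congr rfl fun r _ => ?_
          rw [← Finset.sum_filter]
          exact Finset.sum_congr (Finset.filter_univ_mem (Grp r)) (fun P _ => rfl)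
  have hvarsum : variance (fun ω => ∑ r : Fin M, Y r ω) Pr
      = ∑ r : Fin M, variance (Y r) Pr := by
    have h := IndepFun.variance_sum (μ := Pr) (X := Y) (s := Finset.univ)
      (fun r _ => hYL2 r) (fun r _ s _ hrs => hYindep r s hrs)
    have heq : (∑ r : Fin M, Y r) = fun ω => ∑ r : Fin M, Y r ω := by
      funext ω; simp
    rw [heq] at h
    exact h
  -- identify the sum of variances with the group-weighted sum
  have hfiber : ∀ v : Finset ι → ℝ, ∑ r : Fin M, v (Grp r) = ∑ G ∈ 𝒢, (MG G : ℝ) * v G := by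
    intro v
    rw [← Finset.sum_fiberwise_of_maps_to (fun r _ => hGrp r) (fun r => v (Grp r))]
    refine Finset.sum_congr rfl fun G hG => ?_
    have : ∀ r ∈ Finset.univ.filter (fun r : Fin M => Grp r = G), v (Grp r) = v G := by
      intro r hr
      rw [(Finset.mem_filter.mp hr).2]
    rw [Finset.sum_congr rfl this, Finset.sum_const, hcount G hG, nsmul_eq_mul]
  -- abbreviations for the moments
  set a : Finset ι → ℝ := fun G => ∫ ω, g G ω ∂Pr with hadef
  set b : Finset ι → ℝ := fun G => ∫ ω, (g G ω) ^ 2 ∂Pr with hbdef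
  have hvar_g : ∀ G, variance (g G) Pr = b G - a G ^ 2 := by
    intro G
    rw [variance_eq_sub (hgL2 G)]
    rfl
  have hdetvar : variance (fun ω => ∑ P, (c P / (MP P : ℝ)) *
        ∑ r ∈ Finset.univ.filter (fun r : Fin M => P ∈ Grp r), Xc r P ω) Pr
      = ∑ G ∈ 𝒢, (MG G : ℝ) * (b G - a G ^ 2) := by
    rw [hdet, hvarsum]
    have : ∀ r : Fin M, variance (Y r) Pr = variance (g (Grp r)) Pr :=
      fun r => (hYident r).variance_eq
    rw [Finset.sum_congr rfl (fun r _ => this r), hfiber (fun G => variance (g G) Pr)]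
    exact Finset.sum_congr rfl fun G _ => by rw [hvar_g G]
  -- the Horvitz–Thompson side
  set A : Finset ι → Set Ω := fun G => I ⁻¹' {G} with hAdef
  set ind : Finset ι → Ω → ℝ := fun G => (A G).indicator (fun _ => (1:ℝ)) with hinddef
  set T : Ω → ℝ := fun ω => ∑ P ∈ I ω, (c P / ((MP P : ℝ) / (M : ℝ))) * X P ω with hTdef
  have hcoef : ∀ P, c P / ((MP P:ℝ)/(M:ℝ)) = (M:ℝ) * w P := by
    intro P
    rw [hw, div_div_eq_mul_div, mul_comm (c P) (M:ℝ), mul_div_assoc]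
  have hTg : ∀ ω, T ω = (M:ℝ) * g (I ω) ω := by
    intro ω
    rw [hTdef, hgdef, Finset.mul_sum]
    exact Finset.sum_congr rfl fun P _ => by rw [hcoef P, mul_assoc]
  have hindapp : ∀ G ω, ind G ω = if I ω = G then (1:ℝ) else 0 := by
    intro G ω
    simp [hinddef, hAdef, Set.indicator_apply]
  have hcollapse : ∀ (u : Finset ι → ℝ) (ω : Ω), u (I ω) = ∑ G ∈ 𝒢, ind G ω * u G := by
    intro u ω
    rw [Finset.sum_eq_single_of_mem (I ω) (hImem ω)]
    · rw [hindapp, if_pos rfl, one_mul]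
    · intro G hG hne
      rw [hindapp, if_neg (fun h => hne (h.symm)), zero_mul]
  have hT1 : ∀ ω, T ω = ∑ G ∈ 𝒢, ind G ω * ((M:ℝ) * g G ω) := fun ω => by
    rw [hTg ω]; exact hcollapse (fun G => (M:ℝ) * g G ω) ω
  have hT2 : ∀ ω, T ω ^ 2 = ∑ G ∈ 𝒢, ind G ω * ((M:ℝ) * g G ω) ^ 2 := fun ω => by
    rw [hTg ω]; exact hcollapse (fun G => ((M:ℝ) * g G ω) ^ 2) ω
  -- independence of the indicators and the signal functions
  have hcomapind : ∀ G, MeasurableSpace.comap (ind G) inferInstance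
      ≤ MeasurableSpace.comap I ⊤ := by
    intro G s hs
    obtain ⟨t, -, rfl⟩ := hs
    refine ⟨{H : Finset ι | (if H = G then (1:ℝ) else 0) ∈ t}, trivial, ?_⟩
    ext ω
    simp only [Set.mem_preimage, Set.mem_setOf_eq, hindapp]
  have hXmX : ∀ P, Measurable[⨆ P, MeasurableSpace.comap (X P) inferInstance] (X P) := fun P =>
    Measurable.of_comap_le (le_iSup (fun P => MeasurableSpace.comap (X P) inferInstance) P)
  have hgmX : ∀ G, Measurable[⨆ P, MeasurableSpace.comap (X P) inferInstance] (g G) := fun G =>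
    Finset.measurable_sum _ fun P _ => ((hXmX P).const_mul _)
  have hIndF : ∀ G, ∀ Z : Ω → ℝ, Measurable[⨆ P, MeasurableSpace.comap (X P) inferInstance] Z → IndepFun (ind G) Z Pr := by
    intro G Z hZ
    rw [IndepFun_iff_Indep]
    exact indep_of_indep_of_le_right (indep_of_indep_of_le_left hindep (hcomapind G))
      (Measurable.comap_le hZ)
  have hindmeas : ∀ G, Measurable (ind G) := fun G =>
    (measurable_const).indicator (hImeas G)
  have hindint : ∀ G ∈ 𝒢, ∫ ω, ind G ω ∂Pr = (MG G : ℝ) / M := by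
    intro G hG
    have h := integral_indicator_const (μ := Pr) (1:ℝ) (hImeas G)
    rw [hinddef]
    simp only [hAdef]
    rw [h, smul_eq_mul, mul_one, measureReal_def, hlaw G hG, ENNReal.toReal_ofReal (by positivity)]
  have hmul1 : ∀ G ∈ 𝒢, ∫ ω, ind G ω * ((M:ℝ) * g G ω) ∂Pr = (MG G : ℝ) * a G := by
    intro G hG
    have hZ : Measurable[⨆ P, MeasurableSpace.comap (X P) inferInstance] (fun ω => (M:ℝ) * g G ω) := (hgmX G).const_mul _
    calc ∫ ω, ind G ω * ((M:ℝ) * g G ω) ∂Pr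
        = (∫ ω, ind G ω ∂Pr) * ∫ ω, (M:ℝ) * g G ω ∂Pr :=
          (hIndF G _ hZ).integral_fun_mul_eq_mul_integral (hindmeas G).aestronglyMeasurable
            ((hgmeas G).const_mul _).aestronglyMeasurable
      _ = ((MG G:ℝ)/M) * ((M:ℝ) * a G) := by rw [hindint G hG, integral_const_mul]
      _ = (MG G:ℝ) * a G := by field_simp
  have hmul2 : ∀ G ∈ 𝒢, ∫ ω, ind G ω * ((M:ℝ) * g G ω) ^ 2 ∂Pr
      = (M:ℝ) * ((MG G : ℝ) * b G) := by
    intro G hG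
    have hZ : Measurable[⨆ P, MeasurableSpace.comap (X P) inferInstance] (fun ω => ((M:ℝ) * g G ω) ^ 2) :=
      ((hgmX G).const_mul _).pow_const 2
    calc ∫ ω, ind G ω * ((M:ℝ) * g G ω) ^ 2 ∂Pr
        = (∫ ω, ind G ω ∂Pr) * ∫ ω, ((M:ℝ) * g G ω) ^ 2 ∂Pr :=
          (hIndF G _ hZ).integral_fun_mul_eq_mul_integral (hindmeas G).aestronglyMeasurable
            (((hgmeas G).const_mul _).pow_const 2).aestronglyMeasurable
      _ = ((MG G:ℝ)/M) * ((M:ℝ)^2 * b G) := by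
          rw [hindint G hG]
          congr 1
          simp_rw [mul_pow]
          rw [integral_const_mul]
      _ = (M:ℝ) * ((MG G:ℝ) * b G) := by field_simp
  have hindabs : ∀ G ω, |ind G ω| ≤ 1 := by
    intro G ω
    rw [hindapp]
    split <;> norm_num
  have hMgabs : ∀ G ω, |(M:ℝ) * g G ω| ≤ (M:ℝ) * B := by
    intro G ω
    rw [abs_mul, abs_of_nonneg hMnn]
    exact mul_le_mul_of_nonneg_left (hgbound G ω) hMnn
  have hint1 : ∀ G, Integrable (fun ω => ind G ω * ((M:ℝ) * g G ω)) Pr := by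
    intro G
    refine memLp_one_iff_integrable.mp (MemLp.of_bound
      ((hindmeas G).mul ((hgmeas G).const_mul _)).aestronglyMeasurable ((M:ℝ) * B)
      (Filter.Eventually.of_forall fun ω => ?_))
    rw [Real.norm_eq_abs, abs_mul]
    calc |ind G ω| * |(M:ℝ) * g G ω| ≤ 1 * ((M:ℝ) * B) :=
          mul_le_mul (hindabs G ω) (hMgabs G ω) (abs_nonneg _) zero_le_one
      _ = (M:ℝ) * B := one_mul _
  have hint2 : ∀ G, Integrable (fun ω => ind G ω * ((M:ℝ) * g G ω) ^ 2) Pr := by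
    intro G
    refine memLp_one_iff_integrable.mp (MemLp.of_bound
      ((hindmeas G).mul (((hgmeas G).const_mul _).pow_const 2)).aestronglyMeasurable
      (((M:ℝ) * B) ^ 2) (Filter.Eventually.of_forall fun ω => ?_))
    rw [Real.norm_eq_abs, abs_mul]
    calc |ind G ω| * |((M:ℝ) * g G ω) ^ 2| ≤ 1 * (((M:ℝ) * B) ^ 2) := by
          refine mul_le_mul (hindabs G ω) ?_ (abs_nonneg _) zero_le_one
          rw [abs_pow]
          exact pow_le_pow_left₀ (abs_nonneg _) (hMgabs G ω) 2
      _ = ((M:ℝ) * B) ^ 2 := one_mul _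
  have hET : ∫ ω, T ω ∂Pr = ∑ G ∈ 𝒢, (MG G : ℝ) * a G := by
    calc ∫ ω, T ω ∂Pr = ∫ ω, ∑ G ∈ 𝒢, ind G ω * ((M:ℝ) * g G ω) ∂Pr :=
          integral_congr_ae (Filter.Eventually.of_forall fun ω => hT1 ω)
      _ = ∑ G ∈ 𝒢, ∫ ω, ind G ω * ((M:ℝ) * g G ω) ∂Pr :=
          integral_finset_sum _ (fun G _ => hint1 G)
      _ = ∑ G ∈ 𝒢, (MG G : ℝ) * a G := Finset.sum_congr rfl fun G hG => hmul1 G hG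
  have hET2 : ∫ ω, T ω ^ 2 ∂Pr = (M:ℝ) * ∑ G ∈ 𝒢, (MG G : ℝ) * b G := by
    calc ∫ ω, T ω ^ 2 ∂Pr = ∫ ω, ∑ G ∈ 𝒢, ind G ω * ((M:ℝ) * g G ω) ^ 2 ∂Pr :=
          integral_congr_ae (Filter.Eventually.of_forall fun ω => hT2 ω)
      _ = ∑ G ∈ 𝒢, ∫ ω, ind G ω * ((M:ℝ) * g G ω) ^ 2 ∂Pr :=
          integral_finset_sum _ (fun G _ => hint2 G)
      _ = ∑ G ∈ 𝒢, (M:ℝ) * ((MG G : ℝ) * b G) := Finset.sum_congr rfl fun G hG => hmul2 G hG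
      _ = (M:ℝ) * ∑ G ∈ 𝒢, (MG G : ℝ) * b G := by rw [Finset.mul_sum]
  have hTmeas : Measurable T := by
    have h : T = fun ω => ∑ G ∈ 𝒢, ind G ω * ((M:ℝ) * g G ω) := funext hT1
    rw [h]
    exact Finset.measurable_sum _ fun G _ => (hindmeas G).mul ((hgmeas G).const_mul _)
  have hTL2 : MemLp T 2 Pr :=
    MemLp.of_bound hTmeas.aestronglyMeasurable ((M:ℝ) * B)
      (Filter.Eventually.of_forall fun ω => by
        rw [Real.norm_eq_abs, hTg ω]; exact hMgabs (I ω) ω)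
  have hTvar : variance T Pr
      = (M:ℝ) * ∑ G ∈ 𝒢, (MG G : ℝ) * b G - (∑ G ∈ 𝒢, (MG G : ℝ) * a G) ^ 2 := by
    rw [variance_eq_sub hTL2, ← hET2, ← hET]
    rfl
  -- Cauchy–Schwarz
  have hCS : (∑ G ∈ 𝒢, (MG G : ℝ) * a G) ^ 2 ≤ (M:ℝ) * ∑ G ∈ 𝒢, (MG G : ℝ) * a G ^ 2 := by
    have h := Finset.sum_mul_sq_le_sq_mul_sq 𝒢 (fun G => Real.sqrt (MG G))
      (fun G => Real.sqrt (MG G) * a G)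
    have h1 : ∀ G ∈ 𝒢, Real.sqrt (MG G) * (Real.sqrt (MG G) * a G) = (MG G : ℝ) * a G := by
      intro G hG
      rw [← mul_assoc, Real.mul_self_sqrt (Nat.cast_nonneg _)]
    have h2 : ∀ G ∈ 𝒢, (Real.sqrt (MG G)) ^ 2 = (MG G : ℝ) := by
      intro G hG
      rw [Real.sq_sqrt (Nat.cast_nonneg _)]
    have h3 : ∀ G ∈ 𝒢, (Real.sqrt (MG G) * a G) ^ 2 = (MG G : ℝ) * a G ^ 2 := by
      intro G hG
      rw [mul_pow, Real.sq_sqrt (Nat.cast_nonneg _)]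
    rw [Finset.sum_congr rfl h1, Finset.sum_congr rfl h2, Finset.sum_congr rfl h3] at h
    have h4 : ∑ G ∈ 𝒢, (MG G : ℝ) = (M:ℝ) := by
      rw [hM]; push_cast; ring
    rw [h4] at h
    exact h
  -- put everything together
  rw [hdetvar]
  have hle : ∑ G ∈ 𝒢, (MG G : ℝ) * (b G - a G ^ 2)
      ≤ (1 / (M:ℝ)) * ((M:ℝ) * ∑ G ∈ 𝒢, (MG G : ℝ) * b G
        - (∑ G ∈ 𝒢, (MG G : ℝ) * a G) ^ 2) := by
    have hsplit : ∑ G ∈ 𝒢, (MG G : ℝ) * (b G - a G ^ 2)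
        = ∑ G ∈ 𝒢, (MG G : ℝ) * b G - ∑ G ∈ 𝒢, (MG G : ℝ) * a G ^ 2 := by
      rw [← Finset.sum_sub_distrib]
      exact Finset.sum_congr rfl fun G _ => by ring
    rw [hsplit]
    rw [mul_sub, ← mul_assoc, one_div_mul_cancel hMne, one_mul]
    have h5 := mul_le_mul_of_nonneg_left hCS (by positivity : (0:ℝ) ≤ 1/(M:ℝ))
    rw [← mul_assoc, one_div_mul_cancel hMne, one_mul] at h5
    linarith
  calc ∑ G ∈ 𝒢, (MG G : ℝ) * (b G - a G ^ 2)
      ≤ (1 / (M:ℝ)) * ((M:ℝ) * ∑ G ∈ 𝒢, (MG G : ℝ) * b G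
        - (∑ G ∈ 𝒢, (MG G : ℝ) * a G) ^ 2) := hle
    _ = (1 / (M:ℝ)) * variance T Pr := by rw [hTvar]
    _ = (1 / (M:ℝ)) * variance (fun ω => ∑ P ∈ I ω,
          (c P / ((MP P : ℝ) / (M : ℝ))) * X P ω) Pr := by rw [hTdef]

end Stmt17
end
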